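/- Let u be a compactly supported distribution on R^n of order r, and fix d ∈ R. Writing u = Σ_{|α| ≤ r} (−1)^{|α|} ∂^α u_α with each u_α a compactly supported distribution of order 0, the partial sum over multi-indices with |α| < d − n satisfies: for each such α and each Schwartz function φ, |λ^{d−n} ((−1)^{|α|} ∂^α u_α)(φ ∘ δ_λ^{-1})| ≤ λ^{d−n−|α|} C sup|∂^α φ| for some C > 0, and hence λ^d δ_λ^* applied to this partial sum converges to 0 in the space of tempered distributions as λ → 0^+, where δ_λ(x) = λx and (δ_λ^* u)(f) = λ^{-n} u(f ∘ δ_λ^{-1}). -/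

import Mathlib

open Filter

/-- Partial derivative of a function on `ℝⁿ` in the `i`-th coordinate direction. -/
noncomputable def pder {n : ℕ} (i : Fin n) (φ : (Fin n → ℝ) → ℂ) : (Fin n → ℝ) → ℂ :=
  fun x => fderiv ℝ φ x (Pi.single i 1)

/-- The iterated partial derivative `∂^α φ` for a multi-index `α`. -/
noncomputable def mDeriv {n : ℕ} (α : Fin n → ℕ) (φ : (Fin n → ℝ) → ℂ) : (Fin n → ℝ) → ℂ :=
  (List.ofFn (fun i : Fin n => (pder i)^[α i])).foldr (· ∘ ·) id φ

/-!
Each `∂^α` is homogeneous of degree `|α|` under dilations, so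
`∂^α (φ ∘ δ_λ⁻¹) = λ^{-|α|} (∂^α φ) ∘ δ_λ⁻¹`, and an order-0 functional `u_α` applied to it is
bounded by `λ^{-|α|} C sup|∂^α φ|`. After the prefactor `λ^{d-n}` every term with
`|α| < d - n` carries a positive power of `λ` and vanishes as `λ → 0⁺`.
-/

open Topology

section DilationHomogeneous

variable {E : Type*} [AddCommGroup E] [Module ℝ E]

structure IsDilationHomogeneous (k : ℕ) (T : (E → ℂ) → E → ℂ) : Prop where
  const_mul : ∀ (a : ℂ) ψ, T (fun x => a * ψ x) = fun x => a * T ψ x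
  comp_smul : ∀ (c : ℝ) ψ, T (fun x => ψ (c • x)) = fun x => (c : ℂ) ^ k * T ψ (c • x)

theorem isDilationHomogeneous_id : IsDilationHomogeneous 0 (id : (E → ℂ) → E → ℂ) :=
  ⟨fun _ _ => rfl, fun _ _ => by simp⟩

theorem IsDilationHomogeneous.comp {k m : ℕ} {T S : (E → ℂ) → E → ℂ}
    (hT : IsDilationHomogeneous k T) (hS : IsDilationHomogeneous m S) :
    IsDilationHomogeneous (k + m) (T ∘ S) where
  const_mul a ψ := by simp only [Function.comp_apply, hS.const_mul, hT.const_mul]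
  comp_smul c ψ := by
    simp only [Function.comp_apply, hS.comp_smul, hT.const_mul, hT.comp_smul]
    funext x
    ring

theorem IsDilationHomogeneous.iterate {k : ℕ} {T : (E → ℂ) → E → ℂ}
    (hT : IsDilationHomogeneous k T) (j : ℕ) : IsDilationHomogeneous (k * j) T^[j] := by
  induction j with
  | zero => exact isDilationHomogeneous_id
  | succ j ih => simpa only [Function.iterate_succ', mul_add_one, add_comm] using hT.comp ih

theorem isDilationHomogeneous_foldr_comp_ofFn {m : ℕ} {k : Fin m → ℕ}
    {T : Fin m → (E → ℂ) → E → ℂ} (hT : ∀ i, IsDilationHomogeneous (k i) (T i)) :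
    IsDilationHomogeneous (∑ i, k i) ((List.ofFn T).foldr (· ∘ ·) id) := by
  induction m with
  | zero => exact isDilationHomogeneous_id
  | succ m ih =>
    rw [List.ofFn_succ, List.foldr_cons, Fin.sum_univ_succ]
    exact (hT 0).comp (ih fun i => hT i.succ)

end DilationHomogeneous

theorem isDilationHomogeneous_pder {n : ℕ} (i : Fin n) : IsDilationHomogeneous 1 (pder i) where
  const_mul a ψ := by
    funext x
    simp only [pder, ← smul_eq_mul (a := a), ← Pi.smul_def, fderiv_const_smul_field,
      Pi.smul_apply, FunLike.coe_smul]
  comp_smul c ψ := by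
    funext x
    simp only [pder, fderiv_comp_smul, FunLike.coe_smul, Pi.smul_apply,
      Complex.real_smul, pow_one]

theorem isDilationHomogeneous_mDeriv {n : ℕ} (α : Fin n → ℕ) :
    IsDilationHomogeneous (∑ i, α i) (mDeriv α) := by
  unfold mDeriv
  simpa only [one_mul] using
    isDilationHomogeneous_foldr_comp_ofFn fun i => (isDilationHomogeneous_pder i).iterate (α i)

theorem norm_mDeriv_comp_smul_le {n : ℕ} (α : Fin n → ℕ) {φ : (Fin n → ℝ) → ℂ} {B : ℝ}
    (hB : ∀ x, ‖mDeriv α φ x‖ ≤ B) (c : ℝ) (x : Fin n → ℝ) :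
    ‖mDeriv α (fun y => φ (c • y)) x‖ ≤ |c| ^ (∑ i, α i) * B := by
  rw [(isDilationHomogeneous_mDeriv α).comp_smul, norm_mul, norm_pow, Complex.norm_real,
    Real.norm_eq_abs]
  exact mul_le_mul_of_nonneg_left (hB _) (by positivity)

theorem rpow_mul_norm_map_mDeriv_comp_inv_smul_le {n : ℕ} {v : ((Fin n → ℝ) → ℂ) → ℂ} {C : ℝ}
    (hv : ∀ (φ : (Fin n → ℝ) → ℂ) (B : ℝ), (∀ x, ‖φ x‖ ≤ B) → ‖v φ‖ ≤ C * B)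
    (α : Fin n → ℕ) {φ : (Fin n → ℝ) → ℂ} {B lam : ℝ} (hlam : 0 < lam)
    (hB : ∀ x, ‖mDeriv α φ x‖ ≤ B) (s : ℝ) :
    lam ^ s * ‖v (mDeriv α (fun x => φ (lam⁻¹ • x)))‖ ≤
      lam ^ (s - ((∑ i, α i : ℕ) : ℝ)) * C * B := by
  have hv' := hv _ _ (norm_mDeriv_comp_smul_le α hB lam⁻¹)
  rw [abs_inv, abs_of_pos hlam] at hv'
  calc lam ^ s * ‖v (mDeriv α (fun x => φ (lam⁻¹ • x)))‖
      ≤ lam ^ s * (C * (lam⁻¹ ^ (∑ i, α i) * B)) := by gcongr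
    _ = lam ^ (s - ((∑ i, α i : ℕ) : ℝ)) * C * B := by
      rw [Real.rpow_sub hlam, Real.rpow_natCast, inv_pow]
      ring

theorem tendsto_rpow_mul_sum_nhdsGT_zero {ι : Type*} (S : Finset ι) (w : ι → ℝ → ℂ)
    (s : ℝ) (k M : ι → ℝ) (hk : ∀ α ∈ S, k α < s)
    (hw : ∀ α ∈ S, ∀ lam > 0, lam ^ s * ‖w α lam‖ ≤ lam ^ (s - k α) * M α) :
    Tendsto (fun lam : ℝ => ((lam ^ s : ℝ) : ℂ) * ∑ α ∈ S, w α lam) (𝓝[>] 0) (𝓝 0) := by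
  have hbound : ∀ᶠ lam in 𝓝[>] (0 : ℝ), ‖((lam ^ s : ℝ) : ℂ) * ∑ α ∈ S, w α lam‖ ≤
      ∑ α ∈ S, lam ^ (s - k α) * M α := by
    filter_upwards [self_mem_nhdsWithin] with lam (hlam : 0 < lam)
    rw [norm_mul, Complex.norm_real, Real.norm_of_nonneg (by positivity)]
    calc lam ^ s * ‖∑ α ∈ S, w α lam‖ ≤ ∑ α ∈ S, lam ^ s * ‖w α lam‖ := by
          rw [← Finset.mul_sum]; gcongr; exact norm_sum_le _ _
      _ ≤ ∑ α ∈ S, lam ^ (s - k α) * M α := Finset.sum_le_sum fun α hα => hw α hα lam hlam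
  refine squeeze_zero_norm' hbound ?_
  simpa using tendsto_finsetSum S fun α hα =>
    ((tendsto_id.mono_left nhdsWithin_le_nhds).rpow_const_nhds_zero
      (sub_pos.2 (hk α hα))).mul_const (M α)

open Classical in
/-- Let `u = Σ_{|α| ≤ r} (−1)^{|α|} ∂^α u_α` be a compactly supported distribution of
order `r` on `ℝⁿ`, with each `u_α` a compactly supported distribution of order 0
(so bounded by the sup-norm).  Then for each multi-index with `|α| < d − n` the
scaled action satisfies
`|λ^{d−n} ((−1)^{|α|} ∂^α u_α)(φ ∘ δ_λ⁻¹)| ≤ λ^{d−n−|α|} C sup|∂^α φ|`,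
and hence `λ^d δ_λ^*` applied to the partial sum over `{|α| ≤ r, |α| < d − n}`
converges to `0` on Schwartz test functions as `λ → 0⁺`, where `δ_λ(x) = λx` and
`(δ_λ^* u)(f) = λ^{-n} u(f ∘ δ_λ⁻¹)`.  Note that by definition of the
distributional derivative, `((−1)^{|α|} ∂^α u_α)(ψ) = u_α(∂^α ψ)`. -/
theorem scaling_of_low_order_terms_tendsto_zero
    (n r : ℕ) (d : ℝ)
    (u : (Fin n → ℕ) → (((Fin n → ℝ) → ℂ) → ℂ))
    (hord : ∀ α : Fin n → ℕ, ∃ C > (0 : ℝ), ∀ (φ : (Fin n → ℝ) → ℂ) (B : ℝ),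
      (∀ x, ‖φ x‖ ≤ B) → ‖u α φ‖ ≤ C * B) :
    (∀ α : Fin n → ℕ, ((∑ i, α i : ℕ) : ℝ) < d - n →
      ∃ C > (0 : ℝ), ∀ (φ : (Fin n → ℝ) → ℂ) (B lam : ℝ), 0 < lam →
        (∀ x, ‖mDeriv α φ x‖ ≤ B) →
        lam ^ (d - (n : ℝ)) * ‖u α (mDeriv α (fun x => φ (lam⁻¹ • x)))‖ ≤
          lam ^ (d - (n : ℝ) - ((∑ i, α i : ℕ) : ℝ)) * C * B) ∧
    (∀ φ : (Fin n → ℝ) → ℂ,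
      (∀ α : Fin n → ℕ, ∃ B : ℝ, ∀ x, ‖mDeriv α φ x‖ ≤ B) →
      Tendsto
        (fun lam : ℝ =>
          (lam ^ d : ℝ) * ((lam ^ (-(n : ℝ)) : ℝ) *
            ∑ α ∈ (Fintype.piFinset (fun _ : Fin n => Finset.range (r + 1))).filter
                (fun α => (∑ i, α i) ≤ r ∧ ((∑ i, α i : ℕ) : ℝ) < d - n),
              u α (mDeriv α (fun x => φ (lam⁻¹ • x)))))
        (nhdsWithin 0 (Set.Ioi 0)) (nhds 0)) := by
  refine ⟨fun α _ => ?_, fun φ hφ => ?_⟩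
  · obtain ⟨C, hC, hv⟩ := hord α
    exact ⟨C, hC, fun _ _ _ hlam hB => rpow_mul_norm_map_mDeriv_comp_inv_smul_le hv α hlam hB _⟩
  choose C _ hv using hord
  choose B hB using hφ
  refine Tendsto.congr' ?_ (tendsto_rpow_mul_sum_nhdsGT_zero ?S ?w (d - n)
    (fun α => ((∑ i, α i : ℕ) : ℝ)) (fun α => C α * B α) ?_ ?_)
  -- closing this goal by `rfl` also determines `?S` and `?w`
  · filter_upwards [self_mem_nhdsWithin] with lam (hlam : 0 < lam)
    rw [← mul_assoc, ← Complex.ofReal_mul, ← Real.rpow_add hlam, ← sub_eq_add_neg]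
  · exact fun α hα => (Finset.mem_filter.1 hα).2.2
  · intro α _ lam hlam
    rw [← mul_assoc]
    exact rpow_mul_norm_map_mDeriv_comp_inv_smul_le (hv α) α hlam (hB α) _
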